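/- Fix σ₁ > 0 and σ₂ > 0. Define p : E → ℝ (E = EuclideanSpace ℝ (Fin 2)) by p(x) = (2π σ₁ σ₂)⁻¹ · exp(−x₁²/(2σ₁²) − x₂²/(2σ₂²)), and r : E → E by r(x) = (−σ₁² x₂, σ₂² x₁). Then: (i) div r(x) = 0 for all x; (ii) ⟪r(x), ∇(Real.log ∘ p)(x)⟫ = 0 for all x, so r satisfies the gauge freedom condition with respect to p; and (iii) for every x, the Fréchet derivative Dr(x) is not symmetric, i.e., there exist u, v ∈ E with ⟪Dr(x) u, v⟫ ≠ ⟪Dr(x) v, u⟫. (The counter-example of Section 4: a non-conservative vector field satisfying the gauge freedom condition for a diagonal Gaussian density.) -/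

import Mathlib

/-! With `Σ = diag(σ₁², σ₂²)` and `J` the rotation by `π/2`, the field is the linear map
`r x = Σ J x`, while `∇ (log ∘ p) x = -Σ⁻¹ x`. Hence `⟪r x, ∇ (log ∘ p) x⟫ = -⟪J x, x⟫ = 0`, and
`Dr(x)` is the constant matrix `Σ J = !![0, -σ₁²; σ₂², 0]`, which is traceless and, as
`σ₂² ≠ -σ₁²`, not symmetric. -/

open scoped RealInnerProductSpace
open Real

noncomputable def div (v : EuclideanSpace ℝ (Fin 2) → EuclideanSpace ℝ (Fin 2))
    (x : EuclideanSpace ℝ (Fin 2)) : ℝ :=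
  LinearMap.trace ℝ (EuclideanSpace ℝ (Fin 2)) (fderiv ℝ v x).toLinearMap

open Matrix

theorem div_continuousLinearMap (L : EuclideanSpace ℝ (Fin 2) →L[ℝ] EuclideanSpace ℝ (Fin 2))
    (x : EuclideanSpace ℝ (Fin 2)) : div L x = LinearMap.trace ℝ _ L.toLinearMap := by
  rw [div, L.fderiv]

theorem Matrix.trace_toEuclideanLin {𝕜 n : Type*} [RCLike 𝕜] [Fintype n] [DecidableEq n]
    (A : Matrix n n 𝕜) : LinearMap.trace 𝕜 _ A.toEuclideanLin = A.trace := by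
  rw [toEuclideanLin_eq_toLin_orthonormal, trace_toLin_eq]

theorem Matrix.exists_inner_toEuclideanCLM_ne_of_not_isSymm {n : Type*} [Fintype n]
    [DecidableEq n] {A : Matrix n n ℝ} (hA : ¬ A.IsSymm) :
    ∃ u v, ⟪toEuclideanCLM (𝕜 := ℝ) A u, v⟫ ≠ ⟪toEuclideanCLM (𝕜 := ℝ) A v, u⟫ := by
  contrapose! hA
  rw [← isHermitian_iff_isSymm, ← isSymmetric_toEuclideanLin_iff]
  intro u v
  rw [real_inner_comm (toEuclideanLin A v) u]
  exact hA u v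

section Gaussian

variable {ι : Type*} [Fintype ι]

theorem hasGradientAt_sum_sq_div (w : ι → ℝ) (x : EuclideanSpace ℝ ι) :
    HasGradientAt (fun y : EuclideanSpace ℝ ι => ∑ i, y i ^ 2 / (2 * w i))
      (WithLp.toLp 2 fun i => x i / w i) x := by
  have hsq (i : ι) (t : ℝ) : HasDerivAt (fun t => t ^ 2 / (2 * w i)) (t / w i) t :=
    ((hasDerivAt_pow 2 t).div_const _).congr_deriv (by ring)
  rw [hasGradientAt_iff_hasFDerivAt]
  refine (HasFDerivAt.fun_sum fun i _ => (hsq i (x i)).comp_hasFDerivAt x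
    (EuclideanSpace.proj (𝕜 := ℝ) i).hasFDerivAt).congr_fderiv ?_
  ext v
  simp [PiLp.inner_apply, mul_comm]

theorem hasGradientAt_log_const_mul_exp {c : ℝ} (hc : c ≠ 0)
    (w : ι → ℝ) (x : EuclideanSpace ℝ ι) :
    HasGradientAt (fun y : EuclideanSpace ℝ ι => Real.log (c * Real.exp (-∑ i, y i ^ 2 / (2 * w i))))
      (-WithLp.toLp 2 fun i => x i / w i) x := by
  have hlog : (fun y : EuclideanSpace ℝ ι => Real.log (c * Real.exp (-∑ i, y i ^ 2 / (2 * w i))))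
      = fun y => Real.log c - ∑ i, y i ^ 2 / (2 * w i) := by
    funext y
    rw [Real.log_mul hc (Real.exp_ne_zero _), Real.log_exp, sub_eq_add_neg]
  rw [hlog, hasGradientAt_iff_hasFDerivAt, map_neg]
  exact (hasGradientAt_iff_hasFDerivAt.mp (hasGradientAt_sum_sq_div w x)).const_sub _

end Gaussian

theorem inner_toEuclideanCLM_antidiag_apply_toLp_div {a b : ℝ} (ha : a ≠ 0) (hb : b ≠ 0)
    (x : EuclideanSpace ℝ (Fin 2)) :
    ⟪toEuclideanCLM (𝕜 := ℝ) !![0, -a; b, 0] x, WithLp.toLp 2 fun i => x i / ![a, b] i⟫ = 0 := by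
  simp only [PiLp.inner_apply, ofLp_toEuclideanCLM, RCLike.inner_apply, ringHom_apply,
    Fin.sum_univ_two, mulVec, of_apply, vec2_dotProduct, cons_val_zero, cons_val_one]
  field_simp
  ring

/-- The counter-example of Section 4: for the diagonal Gaussian density `p` the
rotation-like field `r x = (−σ₁² x₂, σ₂² x₁)` is divergence free, satisfies the gauge
freedom condition, yet has a non-symmetric Jacobian everywhere. -/
theorem stmt9 (σ₁ σ₂ : ℝ) (hσ₁ : 0 < σ₁) (hσ₂ : 0 < σ₂)
    (p : EuclideanSpace ℝ (Fin 2) → ℝ)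
    (hp : p = fun x => (2 * π * σ₁ * σ₂)⁻¹ *
      Real.exp (-(x 0) ^ 2 / (2 * σ₁ ^ 2) - (x 1) ^ 2 / (2 * σ₂ ^ 2)))
    (r : EuclideanSpace ℝ (Fin 2) → EuclideanSpace ℝ (Fin 2))
    (hr : r = fun x => (WithLp.equiv 2 (Fin 2 → ℝ)).symm ![-σ₁ ^ 2 * x 1, σ₂ ^ 2 * x 0]) :
    (∀ x, div r x = 0) ∧
    (∀ x, ⟪r x, gradient (Real.log ∘ p) x⟫ = 0) ∧
    (∀ x, ∃ u v : EuclideanSpace ℝ (Fin 2),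
      ⟪fderiv ℝ r x u, v⟫ ≠ ⟪fderiv ℝ r x v, u⟫) := by
  set A : Matrix (Fin 2) (Fin 2) ℝ := !![0, -σ₁ ^ 2; σ₂ ^ 2, 0]
  have hrA : r = toEuclideanCLM (𝕜 := ℝ) A := by
    funext x; ext i; fin_cases i <;> simp [hr, A, mulVec, vecHead, vecTail]
  have hlogp : Real.log ∘ p = fun y : EuclideanSpace ℝ (Fin 2) => Real.log ((2 * π * σ₁ * σ₂)⁻¹ *
      Real.exp (-∑ i, y i ^ 2 / (2 * ![σ₁ ^ 2, σ₂ ^ 2] i))) := by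
    funext y
    rw [Function.comp_apply, hp, Fin.sum_univ_two]
    simp only [cons_val_zero, cons_val_one, neg_add', neg_div]
  refine ⟨fun x => ?_, fun x => ?_, fun x => ?_⟩
  · rw [hrA, div_continuousLinearMap]
    exact (trace_toEuclideanLin A).trans (by simp [A])
  · rw [hlogp, (hasGradientAt_log_const_mul_exp (by positivity) _ x).gradient, inner_neg_right,
      hrA, inner_toEuclideanCLM_antidiag_apply_toLp_div (by positivity) (by positivity), neg_zero]
  · rw [hrA, (toEuclideanCLM (𝕜 := ℝ) A).fderiv]
    refine exists_inner_toEuclideanCLM_ne_of_not_isSymm fun hA => ?_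
    have hentry : -σ₁ ^ 2 = σ₂ ^ 2 := by simpa [A] using hA.apply 1 0
    linarith [pow_pos hσ₁ 2, pow_pos hσ₂ 2]
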